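/- Let m, p, A, h, z, q, b, c, s be nonnegative real numbers with A > 0, z ≥ 0, satisfying: (1) (b)/(A + q) ≥ m/(1+p) where b = m·h + c (i.e., the divisor E computes the jumping number), (2) A ≥ h + z (log discrepancy bound), (3) c ≤ A·s (Izumi inequality), and (4) q ≥ p·h. Then m + s ≥ m·(1 + z/(A·(1+p))). -/
import Mathlib

/-- Numerical content of Theorem C: from (1) `b/(A+q) ≥ m/(1+p)` with `b = m·h + c`,
(2) `A ≥ h + z`, (3) `c ≤ A·s`, and (4) `q ≥ p·h`, deduce
`m + s ≥ m·(1 + z/(A·(1+p)))`. -/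
theorem theoremC_numerical (m p A h z q b c s : ℝ)
    (hm : 0 ≤ m) (hp : 0 ≤ p) (hA : 0 < A) (hh : 0 ≤ h) (hz : 0 ≤ z)
    (hq : 0 ≤ q) (hb : 0 ≤ b) (hc : 0 ≤ c) (hs : 0 ≤ s)
    (hbdef : b = m * h + c)
    (h1 : m / (1 + p) ≤ b / (A + q))
    (h2 : h + z ≤ A)
    (h3 : c ≤ A * s)
    (h4 : p * h ≤ q) :
    m * (1 + z / (A * (1 + p))) ≤ m + s := by
  have hAp : (0:ℝ) < A * (1 + p) := by positivity
  have hAq : (0:ℝ) < A + q := by linarith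
  have h1' : m * (A + q) ≤ b * (1 + p) := by
    rw [div_le_div_iff₀ (by linarith) hAq] at h1; linarith
  have key : m * z ≤ s * (A * (1 + p)) := by nlinarith
  have hdiv : (m * z) / (A * (1 + p)) ≤ s := (div_le_iff₀ hAp).mpr key
  have expand : m * (1 + z / (A * (1 + p))) = m + (m * z) / (A * (1 + p)) := by ring
  linarith
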